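/- arXiv:2112.01133 — 4 statements merged into one kernel-verified Lean document; each statement's English description precedes it below -/
import Mathlib

section
/- The discriminant of the trinomial x^5 + a x^2 + b equals b(5^5 b^3 + 2^2 · 3^3 · a^5), i.e., b(3125 b^3 + 108 a^5). -/
open Polynomial Finset

lemma p4' (f : Fin 5 → ℂ) : ∏ j ∈ ({1,2,3,4} : Finset (Fin 5)), f j = f 1 * (f 2 * (f 3 * f 4)) := by
  rw [Finset.prod_insert (show (1:Fin 5) ∉ ({2,3,4}:Finset (Fin 5)) by decide),
      Finset.prod_insert (show (2:Fin 5) ∉ ({3,4}:Finset (Fin 5)) by decide),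
      Finset.prod_insert (show (3:Fin 5) ∉ ({4}:Finset (Fin 5)) by decide),
      Finset.prod_singleton]

lemma p3' (f : Fin 5 → ℂ) : ∏ j ∈ ({2,3,4} : Finset (Fin 5)), f j = f 2 * (f 3 * f 4) := by
  rw [Finset.prod_insert (show (2:Fin 5) ∉ ({3,4}:Finset (Fin 5)) by decide),
      Finset.prod_insert (show (3:Fin 5) ∉ ({4}:Finset (Fin 5)) by decide),
      Finset.prod_singleton]

lemma p2' (f : Fin 5 → ℂ) : ∏ j ∈ ({3,4} : Finset (Fin 5)), f j = f 3 * f 4 := by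
  rw [Finset.prod_insert (show (3:Fin 5) ∉ ({4}:Finset (Fin 5)) by decide), Finset.prod_singleton]

/-- The discriminant of the monic quintic `x^5 + a x^2 + b`, expressed via its complex
roots, equals `b (5^5 b^3 + 2^2 · 3^3 · a^5) = b (3125 b^3 + 108 a^5)`. -/
theorem stmt_1 (a b : ℤ) (r : Fin 5 → ℂ)
    (hroots : (X ^ 5 + C (a : ℂ) * X ^ 2 + C (b : ℂ)) = ∏ i, (X - C (r i))) :
    (∏ i, ∏ j ∈ Finset.univ.filter (fun j => i < j), (r i - r j) ^ 2)
      = (b : ℂ) * (3125 * (b : ℂ) ^ 3 + 108 * (a : ℂ) ^ 5) := by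
  have h5 : (X ^ 5 + C (a : ℂ) * X ^ 2 + C (b : ℂ))
      = (X - C (r 0)) * ((X - C (r 1)) * ((X - C (r 2)) * ((X - C (r 3)) * (X - C (r 4))))) := by
    rw [hroots, Fin.prod_univ_five]; ring
  have hEval : ∀ z : ℂ, (z - r 0) * ((z - r 1) * ((z - r 2) * ((z - r 3) * (z - r 4))))
      = z ^ 5 + (a:ℂ) * z ^ 2 + (b:ℂ) := by
    intro z
    have h := congrArg (eval z) h5
    simpa using h.symm
  have hder := congrArg derivative h5
  simp only [derivative_add, derivative_mul, derivative_pow, derivative_X, derivative_C,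
    derivative_sub, derivative_one] at hder
  have hD0 : r 0 * (5 * r 0 ^ 3 + 2 * (a:ℂ))
      = (r 0 - r 1) * ((r 0 - r 2) * ((r 0 - r 3) * (r 0 - r 4))) := by
    have h := congrArg (eval (r 0)) hder
    simp only [eval_add, eval_mul, eval_sub, eval_pow, eval_X, eval_C, eval_one, eval_zero,
      eval_natCast, mul_one, one_mul, mul_zero, zero_mul, sub_zero, add_zero, zero_add] at h
    push_cast at h
    linear_combination h
  have hD1 : r 1 * (5 * r 1 ^ 3 + 2 * (a:ℂ))
      = -(r 0 - r 1) * ((r 1 - r 2) * ((r 1 - r 3) * (r 1 - r 4))) := by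
    have h := congrArg (eval (r 1)) hder
    simp only [eval_add, eval_mul, eval_sub, eval_pow, eval_X, eval_C, eval_one, eval_zero,
      eval_natCast, mul_one, one_mul, mul_zero, zero_mul, sub_zero, add_zero, zero_add] at h
    push_cast at h
    linear_combination h
  have hD2 : r 2 * (5 * r 2 ^ 3 + 2 * (a:ℂ))
      = -(r 0 - r 2) * (-(r 1 - r 2) * ((r 2 - r 3) * (r 2 - r 4))) := by
    have h := congrArg (eval (r 2)) hder
    simp only [eval_add, eval_mul, eval_sub, eval_pow, eval_X, eval_C, eval_one, eval_zero,
      eval_natCast, mul_one, one_mul, mul_zero, zero_mul, sub_zero, add_zero, zero_add] at h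
    push_cast at h
    linear_combination h
  have hD3 : r 3 * (5 * r 3 ^ 3 + 2 * (a:ℂ))
      = -(r 0 - r 3) * (-(r 1 - r 3) * (-(r 2 - r 3) * (r 3 - r 4))) := by
    have h := congrArg (eval (r 3)) hder
    simp only [eval_add, eval_mul, eval_sub, eval_pow, eval_X, eval_C, eval_one, eval_zero,
      eval_natCast, mul_one, one_mul, mul_zero, zero_mul, sub_zero, add_zero, zero_add] at h
    push_cast at h
    linear_combination h
  have hD4 : r 4 * (5 * r 4 ^ 3 + 2 * (a:ℂ))
      = -(r 0 - r 4) * (-(r 1 - r 4) * (-(r 2 - r 4) * -(r 3 - r 4))) := by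
    have h := congrArg (eval (r 4)) hder
    simp only [eval_add, eval_mul, eval_sub, eval_pow, eval_X, eval_C, eval_one, eval_zero,
      eval_natCast, mul_one, one_mul, mul_zero, zero_mul, sub_zero, add_zero, zero_add] at h
    push_cast at h
    linear_combination h
  -- step 1 : squared Vandermonde = product of the five bracket products
  have s1 : ((r 0-r 1)^2*((r 0-r 2)^2*((r 0-r 3)^2*(r 0-r 4)^2)))*(((r 1-r 2)^2*((r 1-r 3)^2*(r 1-r 4)^2))*(((r 2-r 3)^2*(r 2-r 4)^2)*((r 3-r 4)^2)))
      = ((r 0 - r 1) * ((r 0 - r 2) * ((r 0 - r 3) * (r 0 - r 4))))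
        * ((-(r 0 - r 1) * ((r 1 - r 2) * ((r 1 - r 3) * (r 1 - r 4))))
        * ((-(r 0 - r 2) * (-(r 1 - r 2) * ((r 2 - r 3) * (r 2 - r 4))))
        * ((-(r 0 - r 3) * (-(r 1 - r 3) * (-(r 2 - r 3) * (r 3 - r 4))))
        * (-(r 0 - r 4) * (-(r 1 - r 4) * (-(r 2 - r 4) * -(r 3 - r 4))))))) := by
    generalize r 0 - r 1 = x01
    generalize r 0 - r 2 = x02
    generalize r 0 - r 3 = x03
    generalize r 0 - r 4 = x04
    generalize r 1 - r 2 = x12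
    generalize r 1 - r 3 = x13
    generalize r 1 - r 4 = x14
    generalize r 2 - r 3 = x23
    generalize r 2 - r 4 = x24
    generalize r 3 - r 4 = x34
    ring
  rw [← hD0, ← hD1, ← hD2, ← hD3, ← hD4] at s1
  -- step 2 : regroup
  have s2 : (r 0 * (5 * r 0 ^ 3 + 2 * (a:ℂ))) * ((r 1 * (5 * r 1 ^ 3 + 2 * (a:ℂ))) * ((r 2 * (5 * r 2 ^ 3 + 2 * (a:ℂ))) * ((r 3 * (5 * r 3 ^ 3 + 2 * (a:ℂ))) * (r 4 * (5 * r 4 ^ 3 + 2 * (a:ℂ))))))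
      = (r 0 * (r 1 * (r 2 * (r 3 * r 4))))
        * ((5 * r 0 ^ 3 + 2 * (a:ℂ)) * ((5 * r 1 ^ 3 + 2 * (a:ℂ)) * ((5 * r 2 ^ 3 + 2 * (a:ℂ)) * ((5 * r 3 ^ 3 + 2 * (a:ℂ)) * (5 * r 4 ^ 3 + 2 * (a:ℂ)))))) := by
    generalize 5 * r 0 ^ 3 + 2 * (a:ℂ) = y0
    generalize 5 * r 1 ^ 3 + 2 * (a:ℂ) = y1
    generalize 5 * r 2 ^ 3 + 2 * (a:ℂ) = y2
    generalize 5 * r 3 ^ 3 + 2 * (a:ℂ) = y3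
    generalize 5 * r 4 ^ 3 + 2 * (a:ℂ) = y4
    ring
  have hprodr : r 0 * (r 1 * (r 2 * (r 3 * r 4))) = -(b:ℂ) := by
    linear_combination -hEval 0
  -- roots of unity and cube root
  obtain ⟨t, ht⟩ := IsAlgClosed.exists_pow_nat_eq ((-2*(a:ℂ))/5) (n := 3) (by norm_num)
  have ht' : 5 * t ^ 3 + 2 * (a:ℂ) = 0 := by rw [ht]; ring
  obtain ⟨ζ, hζ⟩ : ∃ ζ : ℂ, ζ^2 + ζ + 1 = 0 := by
    have hprim := Complex.isPrimitiveRoot_exp 3 (by norm_num)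
    refine ⟨Complex.exp (2 * Real.pi * Complex.I / 3), ?_⟩
    have hz3 : Complex.exp (2 * Real.pi * Complex.I / 3) ^ 3 = 1 := hprim.pow_eq_one
    have hzne : Complex.exp (2 * Real.pi * Complex.I / 3) ≠ 1 := hprim.ne_one (by norm_num)
    have hmul : (Complex.exp (2 * Real.pi * Complex.I / 3) - 1)
        * (Complex.exp (2 * Real.pi * Complex.I / 3) ^ 2 + Complex.exp (2 * Real.pi * Complex.I / 3) + 1) = 0 := by
      linear_combination hz3
    rcases mul_eq_zero.mp hmul with h | h
    · exact absurd (sub_eq_zero.mp h) hzne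
    · exact h
  have hfac : ∀ z : ℂ, 5 * z ^ 3 + 2 * (a:ℂ) = 5 * ((z - t) * ((z - ζ*t) * (z - ζ^2*t))) := by
    intro z
    linear_combination ht' + (5*t*z^2 - 5*ζ*t^2*z + 5*t^3*(ζ-1)) * hζ
  have hneg : ∀ u : ℂ, (r 0 - u) * ((r 1 - u) * ((r 2 - u) * ((r 3 - u) * (r 4 - u))))
      = -(u^5 + (a:ℂ)*u^2 + (b:ℂ)) := by
    intro u
    linear_combination -hEval u
  have e : ∀ u : ℂ, u^3 = t^3 → 5*(u^5 + (a:ℂ)*u^2 + (b:ℂ)) = 3*(a:ℂ)*u^2 + 5*(b:ℂ) := by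
    intro u hu
    linear_combination 5*u^2*hu + u^2*ht'
  have h1 := e t rfl
  have h2 := e (ζ*t) (by linear_combination t^3*(ζ-1)*hζ)
  have h3 := e (ζ^2*t) (by linear_combination t^3*(ζ^3+1)*(ζ-1)*hζ)
  have hG : (3*(a:ℂ)*t^2+5*(b:ℂ)) * ((3*(a:ℂ)*(ζ*t)^2+5*(b:ℂ)) * (3*(a:ℂ)*(ζ^2*t)^2+5*(b:ℂ)))
      = 125*(b:ℂ)^3 + 27*(a:ℂ)^3*t^6 := by
    linear_combination (((5*(b:ℂ))^2*(3*(a:ℂ)*t^2) + (5*(b:ℂ))*(3*(a:ℂ)*t^2)^2)*(1 + ζ*(ζ-1))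
      + (5*(b:ℂ))*(3*(a:ℂ)*t^2)^2*(ζ^3+1)*(ζ-1) + (3*(a:ℂ)*t^2)^3*(ζ^3+1)*(ζ-1)) * hζ
  have hH6 : 25*t^6 = 4*(a:ℂ)^2 := by linear_combination (5*t^3 - 2*(a:ℂ))*ht'
  have hfinal : 3125 * ((-(t^5 + (a:ℂ)*t^2 + (b:ℂ)))
        * ((-((ζ*t)^5 + (a:ℂ)*(ζ*t)^2 + (b:ℂ))) * (-((ζ^2*t)^5 + (a:ℂ)*(ζ^2*t)^2 + (b:ℂ)))))
      = -(3125*(b:ℂ)^3 + 108*(a:ℂ)^5) := by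
    have hprod3 : (125:ℂ) * ((t^5 + (a:ℂ)*t^2 + (b:ℂ))
          * (((ζ*t)^5 + (a:ℂ)*(ζ*t)^2 + (b:ℂ)) * ((ζ^2*t)^5 + (a:ℂ)*(ζ^2*t)^2 + (b:ℂ))))
        = (3*(a:ℂ)*t^2+5*(b:ℂ)) * ((3*(a:ℂ)*(ζ*t)^2+5*(b:ℂ)) * (3*(a:ℂ)*(ζ^2*t)^2+5*(b:ℂ))) := by
      rw [← h1, ← h2, ← h3]
      generalize t^5 + (a:ℂ)*t^2 + (b:ℂ) = ft
      generalize (ζ*t)^5 + (a:ℂ)*(ζ*t)^2 + (b:ℂ) = fu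
      generalize (ζ^2*t)^5 + (a:ℂ)*(ζ^2*t)^2 + (b:ℂ) = fv
      ring
    set ft := t^5 + (a:ℂ)*t^2 + (b:ℂ) with hft
    set fu := (ζ*t)^5 + (a:ℂ)*(ζ*t)^2 + (b:ℂ) with hfu
    set fv := (ζ^2*t)^5 + (a:ℂ)*(ζ^2*t)^2 + (b:ℂ) with hfv
    linear_combination -25*hprod3 - 25*hG - 27*(a:ℂ)^3*hH6
  have hQ : (5 * r 0 ^ 3 + 2 * (a:ℂ)) * ((5 * r 1 ^ 3 + 2 * (a:ℂ)) * ((5 * r 2 ^ 3 + 2 * (a:ℂ)) * ((5 * r 3 ^ 3 + 2 * (a:ℂ)) * (5 * r 4 ^ 3 + 2 * (a:ℂ)))))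
      = -(3125*(b:ℂ)^3 + 108*(a:ℂ)^5) := by
    have step : (5 * r 0 ^ 3 + 2 * (a:ℂ)) * ((5 * r 1 ^ 3 + 2 * (a:ℂ)) * ((5 * r 2 ^ 3 + 2 * (a:ℂ)) * ((5 * r 3 ^ 3 + 2 * (a:ℂ)) * (5 * r 4 ^ 3 + 2 * (a:ℂ)))))
        = 3125 * (((r 0 - t) * ((r 1 - t) * ((r 2 - t) * ((r 3 - t) * (r 4 - t)))))
          * (((r 0 - ζ*t) * ((r 1 - ζ*t) * ((r 2 - ζ*t) * ((r 3 - ζ*t) * (r 4 - ζ*t)))))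
          * ((r 0 - ζ^2*t) * ((r 1 - ζ^2*t) * ((r 2 - ζ^2*t) * ((r 3 - ζ^2*t) * (r 4 - ζ^2*t))))))) := by
      simp only [hfac]
      generalize r 0 - t = u0
      generalize r 1 - t = u1
      generalize r 2 - t = u2
      generalize r 3 - t = u3
      generalize r 4 - t = u4
      generalize r 0 - ζ*t = v0
      generalize r 1 - ζ*t = v1
      generalize r 2 - ζ*t = v2
      generalize r 3 - ζ*t = v3
      generalize r 4 - ζ*t = v4
      generalize r 0 - ζ^2*t = w0
      generalize r 1 - ζ^2*t = w1
      generalize r 2 - ζ^2*t = w2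
      generalize r 3 - ζ^2*t = w3
      generalize r 4 - ζ^2*t = w4
      ring
    rw [step, hneg t, hneg (ζ*t), hneg (ζ^2*t)]
    exact hfinal
  -- assemble
  rw [Fin.prod_univ_five,
     show (univ.filter (fun j => (0:Fin 5) < j)) = {1,2,3,4} from by decide,
     show (univ.filter (fun j => (1:Fin 5) < j)) = {2,3,4} from by decide,
     show (univ.filter (fun j => (2:Fin 5) < j)) = {3,4} from by decide,
     show (univ.filter (fun j => (3:Fin 5) < j)) = {4} from by decide,
     show (univ.filter (fun j => (4:Fin 5) < j)) = ∅ from by decide,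
     p4', p3', p2', Finset.prod_singleton, Finset.prod_empty, mul_one]
  calc ((((r 0-r 1)^2*((r 0-r 2)^2*((r 0-r 3)^2*(r 0-r 4)^2))) * ((r 1-r 2)^2*((r 1-r 3)^2*(r 1-r 4)^2))) * ((r 2-r 3)^2*(r 2-r 4)^2)) * (r 3-r 4)^2
      = ((r 0-r 1)^2*((r 0-r 2)^2*((r 0-r 3)^2*(r 0-r 4)^2)))*(((r 1-r 2)^2*((r 1-r 3)^2*(r 1-r 4)^2))*(((r 2-r 3)^2*(r 2-r 4)^2)*((r 3-r 4)^2))) := by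
        generalize r 0 - r 1 = x01
        generalize r 0 - r 2 = x02
        generalize r 0 - r 3 = x03
        generalize r 0 - r 4 = x04
        generalize r 1 - r 2 = x12
        generalize r 1 - r 3 = x13
        generalize r 1 - r 4 = x14
        generalize r 2 - r 3 = x23
        generalize r 2 - r 4 = x24
        generalize r 3 - r 4 = x34
        ring
    _ = (r 0 * (5 * r 0 ^ 3 + 2 * (a:ℂ))) * ((r 1 * (5 * r 1 ^ 3 + 2 * (a:ℂ))) * ((r 2 * (5 * r 2 ^ 3 + 2 * (a:ℂ))) * ((r 3 * (5 * r 3 ^ 3 + 2 * (a:ℂ))) * (r 4 * (5 * r 4 ^ 3 + 2 * (a:ℂ)))))) := s1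
    _ = (r 0 * (r 1 * (r 2 * (r 3 * r 4))))
        * ((5 * r 0 ^ 3 + 2 * (a:ℂ)) * ((5 * r 1 ^ 3 + 2 * (a:ℂ)) * ((5 * r 2 ^ 3 + 2 * (a:ℂ)) * ((5 * r 3 ^ 3 + 2 * (a:ℂ)) * (5 * r 4 ^ 3 + 2 * (a:ℂ)))))) := s2
    _ = (-(b:ℂ)) * (-(3125*(b:ℂ)^3 + 108*(a:ℂ)^5)) := by rw [hprodr, hQ]
    _ = (b : ℂ) * (3125 * (b : ℂ) ^ 3 + 108 * (a : ℂ) ^ 5) := by ring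
end

section
/- Let p be a prime, r, m, u, v positive integers with 2 ≤ u ≤ v and 1 ≤ m < p^r, and a, b integers with p ∤ a, p ∤ b, p ∤ u. Then the polynomial F(x) = x^{p^r} + p^v a x^m + p^u b is irreducible over ℚ. -/
/-!
Put `n = p ^ r` and measure polynomials over `ℚ` by the Gauss norm for the `p`-adic absolute value
at radius `c = p ^ (-u / n)`. Then every term of `F` has size at most `c ^ n = |F(0)|_p`: the
Newton polygon of `F` is the single segment from `(0, u)` to `(n, 0)`. The Gauss norm is
multiplicative, so for a factorization `F = G * H` into monic polynomials the bounds
`‖G‖ ≥ c ^ deg G`, `‖G‖ ≥ |G(0)|_p` (and likewise for `H`) are all equalities. Hence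
`|G(0)|_p = c ^ deg G`, i.e. `n * v_p(G(0)) = u * deg G`, and `gcd(n, u) = 1` gives `n ∣ deg G`.
-/

open Polynomial

namespace Polynomial

section Trinomial

variable {R : Type*} [Semiring R] {n m : ℕ}

theorem degree_C_mul_X_pow_add_C_lt (hmn : m < n) (α β : R) :
    (C α * X ^ m + C β).degree < (n : WithBot ℕ) :=
  (degree_add_le _ _).trans_lt <| max_lt
    ((degree_C_mul_X_pow_le _ _).trans_lt (by exact_mod_cast hmn))
    (degree_C_le.trans_lt (by exact_mod_cast m.zero_le.trans_lt hmn))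

theorem monic_X_pow_add_C_mul_X_pow_add_C [Nontrivial R] (hmn : m < n) (α β : R) :
    (X ^ n + C α * X ^ m + C β).Monic := by
  rw [add_assoc]
  exact monic_X_pow_add (degree_C_mul_X_pow_add_C_lt hmn α β)

theorem natDegree_X_pow_add_C_mul_X_pow_add_C [Nontrivial R] (hmn : m < n) (α β : R) :
    (X ^ n + C α * X ^ m + C β).natDegree = n := by
  rw [add_assoc, natDegree_add_eq_left_of_degree_lt, natDegree_X_pow]
  simpa using degree_C_mul_X_pow_add_C_lt hmn α β

theorem coeff_zero_X_pow_add_C_mul_X_pow_add_C (hm : 0 < m) (hmn : m < n) (α β : R) :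
    (X ^ n + C α * X ^ m + C β).coeff 0 = β := by
  simp [coeff_X_pow, hm.ne, (hm.trans hmn).ne]

end Trinomial

variable {R : Type*} [Ring R] {v : AbsoluteValue R ℝ} {c : ℝ}

theorem gaussNorm_X_pow_add_C_mul_X_pow_add_C_le [Nontrivial R] (hna : IsNonarchimedean v)
    (hc : 0 ≤ c) (n m : ℕ) (α β : R) :
    (X ^ n + C α * X ^ m + C β).gaussNorm v c ≤ max (max (c ^ n) (v α * c ^ m)) (v β) := by
  have hN := isNonarchimedean_gaussNorm v hna hc
  calc _ ≤ max ((X ^ n + C α * X ^ m).gaussNorm v c) ((C β).gaussNorm v c) := hN _ _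
    _ ≤ _ := by
      gcongr
      · refine (hN _ _).trans ?_
        rw [C_mul_X_pow_eq_monomial, ← monomial_one_right_eq_X_pow, gaussNorm_monomial,
          gaussNorm_monomial, map_one, one_mul]
      · rw [gaussNorm_C]

theorem Monic.pow_natDegree_le_gaussNorm [Nontrivial R] {g : R[X]} (hg : g.Monic) (hc : 0 ≤ c) :
    c ^ g.natDegree ≤ g.gaussNorm v c := by
  simpa [hg.coeff_natDegree] using g.le_gaussNorm v hc g.natDegree

theorem Monic.apply_coeff_zero_eq_of_gaussNorm_mul_le [Nontrivial R] (hna : IsNonarchimedean v)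
    (hc : 0 < c) {g h : R[X]} (hg : g.Monic) (hh : h.Monic)
    (hN : (g * h).gaussNorm v c ≤ c ^ (g * h).natDegree)
    (h0 : v ((g * h).coeff 0) = c ^ (g * h).natDegree) :
    v (g.coeff 0) = c ^ g.natDegree := by
  have hgN := hg.pow_natDegree_le_gaussNorm (v := v) hc.le
  have hhN := hh.pow_natDegree_le_gaussNorm (v := v) hc.le
  have hg0 : v (g.coeff 0) ≤ g.gaussNorm v c := by simpa using g.le_gaussNorm v hc.le 0
  have hh0 : v (h.coeff 0) ≤ h.gaussNorm v c := by simpa using h.le_gaussNorm v hc.le 0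
  rw [gaussNorm_mul hna hc, hg.natDegree_mul hh, pow_add] at hN
  rw [mul_coeff_zero, map_mul, hg.natDegree_mul hh, pow_add] at h0
  have hgpos := pow_pos hc g.natDegree
  have hhpos := pow_pos hc h.natDegree
  have hgN_eq : g.gaussNorm v c = c ^ g.natDegree := by nlinarith
  have hhN_eq : h.gaussNorm v c = c ^ h.natDegree := by nlinarith
  rw [hgN_eq] at hg0
  rw [hhN_eq] at hh0
  nlinarith [v.nonneg (g.coeff 0), v.nonneg (h.coeff 0)]

end Polynomial

namespace Rat.AbsoluteValue

variable {p : ℕ} [Fact p.Prime]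

theorem isNonarchimedean_padic : IsNonarchimedean (padic p) := fun x y => by
  simp only [padic_eq_padicNorm]
  exact_mod_cast padicNorm.nonarchimedean

theorem padic_natCast_self : padic p p = (p : ℝ)⁻¹ := by
  simp [padicNorm.padicNorm_p_of_prime]

theorem padic_pow_mul_intCast_le (w : ℕ) (a : ℤ) :
    padic p ((p : ℚ) ^ w * a) ≤ ((p : ℝ) ^ w)⁻¹ := by
  rw [map_mul, map_pow, padic_natCast_self, inv_pow]
  exact mul_le_of_le_one_right (by positivity) (padic_le_one p a)

theorem padic_pow_mul_intCast_of_not_dvd (w : ℕ) {b : ℤ} (hb : ¬ (p : ℤ) ∣ b) :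
    padic p ((p : ℚ) ^ w * b) = ((p : ℝ) ^ w)⁻¹ := by
  rw [map_mul, map_pow, padic_natCast_self, inv_pow, padic_eq_padicNorm,
    (padicNorm.int_eq_one_iff b).mpr hb, Rat.cast_one, mul_one]

theorem gaussNorm_trinomial_le {n m u v : ℕ} {c : ℝ} (hc : 0 ≤ c) (hc1 : c ≤ 1)
    (hcn : c ^ n = ((p : ℝ) ^ u)⁻¹) (huv : u ≤ v) (a b : ℤ) :
    (X ^ n + C ((p : ℚ) ^ v * a) * X ^ m + C ((p : ℚ) ^ u * b)).gaussNorm (padic p) c ≤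
      ((p : ℝ) ^ u)⁻¹ := by
  have hp1 : (1 : ℝ) ≤ p := by exact_mod_cast (Fact.out : p.Prime).one_le
  refine (gaussNorm_X_pow_add_C_mul_X_pow_add_C_le isNonarchimedean_padic hc _ _ _ _).trans
    (max_le (max_le hcn.le ?_) (padic_pow_mul_intCast_le u b))
  calc padic p ((p : ℚ) ^ v * a) * c ^ m ≤ ((p : ℝ) ^ v)⁻¹ * 1 := by
        gcongr
        exacts [padic_pow_mul_intCast_le v a, pow_le_one₀ hc hc1]
    _ ≤ ((p : ℝ) ^ u)⁻¹ := by
        rw [mul_one]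
        exact inv_anti₀ (pow_pos (by linarith) u) (pow_le_pow_right₀ hp1 huv)

theorem dvd_of_padic_eq_pow {n u d : ℕ} {c : ℝ} {x : ℚ} (hx : x ≠ 0) (hnu : n.Coprime u)
    (hcn : c ^ n = ((p : ℝ) ^ u)⁻¹) (hxc : padic p x = c ^ d) : n ∣ d := by
  have hp : (1 : ℝ) < p := by exact_mod_cast (Fact.out : p.Prime).one_lt
  have hx' : padic p x = (p : ℝ) ^ (-padicValRat p x) := by
    rw [padic_eq_padicNorm, padicNorm.eq_zpow_of_nonzero hx]
    push_cast
    rfl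
  have hpow : (p : ℝ) ^ (-(padicValRat p x * n)) = (p : ℝ) ^ (-((u * d : ℕ) : ℤ)) :=
    calc (p : ℝ) ^ (-(padicValRat p x * n)) = padic p x ^ n := by
          rw [hx', ← zpow_natCast, ← zpow_mul, neg_mul]
      _ = (c ^ n) ^ d := by rw [hxc, ← pow_mul, ← pow_mul, mul_comm]
      _ = _ := by rw [hcn, inv_pow, ← pow_mul, zpow_neg, zpow_natCast]
  have hval : padicValRat p x * n = u * d := by
    have := (zpow_right_inj₀ (by positivity) hp.ne').mp hpow
    push_cast at this
    linarith
  have hdvd : (n : ℤ) ∣ (u * d : ℕ) := ⟨padicValRat p x, by push_cast; linarith⟩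
  exact hnu.dvd_of_dvd_mul_left (Int.natCast_dvd_natCast.mp hdvd)

theorem irreducible_of_gaussNorm_le {f : ℚ[X]} {u : ℕ} {c : ℝ} (hf : f.Monic)
    (hdeg : 0 < f.natDegree) (hcop : f.natDegree.Coprime u) (hc : 0 < c)
    (hcn : c ^ f.natDegree = ((p : ℝ) ^ u)⁻¹)
    (hN : f.gaussNorm (padic p) c ≤ c ^ f.natDegree)
    (h0 : padic p (f.coeff 0) = c ^ f.natDegree) :
    Irreducible f := by
  rw [hf.irreducible_iff_natDegree]
  refine ⟨fun h1 => by simp [h1] at hdeg, fun g h hg hh hgh => ?_⟩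
  subst hgh
  have hg0 : g.coeff 0 ≠ 0 := by
    intro hg0
    rw [mul_coeff_zero, hg0, zero_mul, map_zero] at h0
    exact (pow_pos hc _).ne h0
  have hdvd := dvd_of_padic_eq_pow hg0 hcop hcn
    (hg.apply_coeff_zero_eq_of_gaussNorm_mul_le isNonarchimedean_padic hc hh hN h0)
  rw [hg.natDegree_mul hh] at hdvd
  rcases Nat.eq_zero_or_pos g.natDegree with hg | hg
  · exact Or.inl hg
  · have := Nat.le_of_dvd hg hdvd
    exact Or.inr (by omega)

end Rat.AbsoluteValue

open Rat.AbsoluteValue in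
theorem stmt_5_general (p : ℕ) (hp : p.Prime) (r m u v : ℕ) (a b : ℤ)
    (huv : u ≤ v) (hm1 : 1 ≤ m) (hm : m < p ^ r)
    (hb : ¬ (p : ℤ) ∣ b) (hpu : ¬ p ∣ u) :
    Irreducible (X ^ (p ^ r) + C ((p : ℚ) ^ v * (a : ℚ)) * X ^ m
      + C ((p : ℚ) ^ u * (b : ℚ))) := by
  have : Fact p.Prime := ⟨hp⟩
  set F : ℚ[X] :=
    X ^ (p ^ r) + C ((p : ℚ) ^ v * (a : ℚ)) * X ^ m + C ((p : ℚ) ^ u * (b : ℚ))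
  have hdeg : F.natDegree = p ^ r := natDegree_X_pow_add_C_mul_X_pow_add_C hm _ _
  have hp1 : (1 : ℝ) ≤ p := by exact_mod_cast hp.one_le
  set c : ℝ := ((p : ℝ) ^ u)⁻¹ ^ ((p ^ r : ℕ) : ℝ)⁻¹
  have hc : 0 < c := Real.rpow_pos_of_pos (by positivity) _
  have hcn : c ^ p ^ r = ((p : ℝ) ^ u)⁻¹ :=
    Real.rpow_inv_natCast_pow (by positivity) (by omega)
  have hc1 : c ≤ 1 :=
    Real.rpow_le_one (by positivity) (inv_le_one_of_one_le₀ (one_le_pow₀ hp1)) (by positivity)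
  have hN : F.gaussNorm (padic p) c ≤ c ^ F.natDegree := by
    rw [hdeg, hcn]
    exact gaussNorm_trinomial_le hc.le hc1 hcn huv a b
  have h0 : padic p (F.coeff 0) = c ^ F.natDegree := by
    rw [hdeg, hcn, coeff_zero_X_pow_add_C_mul_X_pow_add_C hm1 hm]
    exact padic_pow_mul_intCast_of_not_dvd u hb
  exact irreducible_of_gaussNorm_le (monic_X_pow_add_C_mul_X_pow_add_C hm _ _) (by omega)
    (by rw [hdeg]; exact (hp.coprime_iff_not_dvd.mpr hpu).pow_left r) hc (by rw [hdeg, hcn])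
    hN h0

theorem stmt_5 (p : ℕ) (hp : p.Prime) (r m u v : ℕ) (a b : ℤ)
    (hr : 0 < r) (hu2 : 2 ≤ u) (huv : u ≤ v) (hm1 : 1 ≤ m) (hm : m < p ^ r)
    (ha : ¬ (p : ℤ) ∣ a) (hb : ¬ (p : ℤ) ∣ b) (hpu : ¬ p ∣ u) :
    Irreducible (X ^ (p ^ r) + C ((p : ℚ) ^ v * (a : ℚ)) * X ^ m
      + C ((p : ℚ) ^ u * (b : ℚ))) :=
  stmt_5_general p hp r m u v a b huv hm1 hm hb hpu
end

section
/- Let p be a prime, and F(x) = x^{p^r} + p^v a x^m + p^u b with p ∤ abu, 2 ≤ u ≤ v, 1 ≤ m < p^r, irreducible with root α generating K = ℚ(α). Then p divides the index [Z_K : Z[α]]; in particular F is not monogenic as a polynomial. -/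
/-!
Reduced modulo `p`, `F` becomes `X ^ p ^ r`. As `p ∤ u` and `u ≥ 2`, there are `s < p ^ r` and
`t ≥ 1` with `u * s = t * p ^ r + 1`. Writing `α ^ p ^ r = p ^ u * c`, the `p ^ r`-th power of
`α ^ s` is divisible by `p ^ (u * s) = (p ^ t) ^ p ^ r * p`, so `p ^ t ∣ α ^ s` in the integrally
closed ring `𝓞 K`; call the quotient `θ`. If `θ` were `g(α)` with `g ∈ ℤ[X]`, then `F` would divide
`X ^ s - p ^ t * g`, and modulo `p` this reads `X ^ p ^ r ∣ X ^ s`, impossible as `s < p ^ r`.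
So `θ` is a nonzero element of `𝓞 K / ℤ[α]` killed by `p ^ t`, and `p` divides the index.
-/

open Polynomial NumberField

noncomputable def subIndex {K : Type*} [Field K] [NumberField K] (θ : 𝓞 K) : ℕ :=
  (Algebra.adjoin ℤ ({θ} : Set (𝓞 K))).toSubring.toAddSubgroup.index

def IsCommonIndexDivisor (p : ℕ) (K : Type*) [Field K] [NumberField K] : Prop :=
  ∀ θ : 𝓞 K, Algebra.adjoin ℚ ({(θ : K)} : Set K) = ⊤ → p ∣ subIndex θ

def IsMonogenic (K : Type*) [Field K] [NumberField K] : Prop :=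
  ∃ θ : 𝓞 K, Algebra.adjoin ℤ ({θ} : Set (𝓞 K)) = ⊤

theorem Nat.exists_mul_eq_mul_add_one {n u : ℕ} (hn : 1 < n) (hu : 2 ≤ u) (hcop : u.Coprime n) :
    ∃ s t, s < n ∧ 0 < t ∧ u * s = t * n + 1 := by
  obtain ⟨s, hsn, hmod⟩ := Nat.exists_mul_mod_eq_one_of_coprime hcop hn
  refine ⟨s, u * s / n, hsn, Nat.pos_of_ne_zero fun ht => ?_, ?_⟩
  · have : u * s = 1 := by rw [← Nat.div_add_mod (u * s) n, ht, hmod]; simp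
    have := Nat.eq_one_of_mul_eq_one_right this
    omega
  · rw [← hmod, mul_comm _ n, Nat.div_add_mod]

theorem pow_dvd_pow_of_pow_eq_pow_mul {R : Type*} [CommRing R] [IsDomain R] [IsIntegrallyClosed R]
    {α π c : R} {n u s t : ℕ} (hn : n ≠ 0) (h : α ^ n = π ^ u * c) (hust : u * s = t * n + 1) :
    π ^ t ∣ α ^ s := by
  rw [← IsIntegrallyClosed.pow_dvd_pow_iff hn]
  refine ⟨π * c ^ s, ?_⟩
  rw [← pow_mul, mul_comm s, pow_mul, h, mul_pow, ← pow_mul, hust]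
  ring

theorem minpoly.eq_of_monic_of_irreducible_map {R S K : Type*} [CommRing R] [IsDomain R]
    [IsIntegrallyClosed R] [CommRing S] [IsDomain S] [Algebra R S] [Module.IsTorsionFree R S]
    [Field K] [Algebra R K] [IsFractionRing R K] {f : R[X]} (hf : f.Monic)
    (hirr : Irreducible (f.map (algebraMap R K))) {s : S} (hs : Polynomial.aeval s f = 0) :
    minpoly R s = f := by
  have hint : IsIntegral R s := ⟨f, hf, hs⟩
  exact eq_of_monic_of_associated (minpoly.monic hint) hf <|
    (minpoly.irreducible hint).associated_of_dvd
      ((hf.irreducible_iff_irreducible_map_fraction_map (K := K)).mpr hirr)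
      (minpoly.isIntegrallyClosed_dvd hint hs)

theorem notMem_adjoin_of_prime_pow_mul_eq_pow {S : Type*} [CommRing S] [IsDomain S]
    [Module.IsTorsionFree ℤ S] {p : ℕ} [Fact p.Prime] {α θ : S} (hα : IsIntegral ℤ α) {n s t : ℕ}
    (hmod : (minpoly ℤ α).map (Int.castRingHom (ZMod p)) = X ^ n) (hs : s < n) (ht : t ≠ 0)
    (hθ : (p : S) ^ t * θ = α ^ s) : θ ∉ Algebra.adjoin ℤ {α} := by
  rw [Algebra.adjoin_singleton_eq_range_aeval]
  rintro ⟨g, rfl⟩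
  have hroot : aeval α (X ^ s - C ((p : ℤ) ^ t) * g) = 0 := by
    simp [← hθ]
  have hdvd : (X : (ZMod p)[X]) ^ n ∣ X ^ s := by
    simpa [hmod, ht] using
      Polynomial.map_dvd (Int.castRingHom (ZMod p)) (minpoly.isIntegrallyClosed_dvd hα hroot)
  exact hs.not_ge ((pow_dvd_pow_iff X_ne_zero not_isUnit_X).mp hdvd)

theorem AddSubgroup.prime_dvd_index_of_notMem_of_nsmul_mem {G : Type*} [AddGroup G]
    {A : AddSubgroup G} [A.Normal] {p t : ℕ} (hp : p.Prime) {x : G} (hx : x ∉ A)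
    (hpx : p ^ t • x ∈ A) : p ∣ A.index := by
  set ξ : G ⧸ A := (x : G ⧸ A)
  have hξ : ξ ≠ 0 := by rwa [Ne, QuotientAddGroup.eq_zero_iff]
  have hord : addOrderOf ξ ∣ p ^ t := addOrderOf_dvd_of_nsmul_eq_zero <| by
    rwa [← QuotientAddGroup.mk_nsmul, QuotientAddGroup.eq_zero_iff]
  obtain ⟨k, -, hk⟩ := (Nat.dvd_prime_pow hp).mp hord
  have hk0 : k ≠ 0 := by
    rintro rfl
    exact hξ (AddMonoid.addOrderOf_eq_one_iff.mp (by simpa using hk))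
  exact (hk ▸ dvd_pow_self p hk0).trans (A.index_eq_card ▸ _root_.addOrderOf_dvd_natCard ξ)

theorem stmt_6_general (p : ℕ) (hp : p.Prime) (r m u v : ℕ) (a b : ℤ)
    (hu2 : 2 ≤ u) (huv : u ≤ v) (hm1 : 1 ≤ m) (hm : m < p ^ r)
    (hpu : ¬ p ∣ u)
    (hirr : Irreducible (X ^ (p ^ r) + C ((p : ℚ) ^ v * (a : ℚ)) * X ^ m
      + C ((p : ℚ) ^ u * (b : ℚ))))
    (K : Type*) [Field K] [NumberField K] (α : 𝓞 K)
    (hroot : (α : K) ^ (p ^ r) + ((p : K) ^ v * (a : K)) * (α : K) ^ m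
      + (p : K) ^ u * (b : K) = 0) :
    p ∣ subIndex α := by
  have : Fact p.Prime := ⟨hp⟩
  set F : ℤ[X] := X ^ p ^ r + C ((p : ℤ) ^ v * a) * X ^ m + C ((p : ℤ) ^ u * b)
  have hFmonic : F.Monic := by
    simp only [F]
    monicity!
    simp [hm.le, hm.not_ge, hp.ne_zero]
  have hFα : α ^ p ^ r + (p : 𝓞 K) ^ v * a * α ^ m + (p : 𝓞 K) ^ u * b = 0 :=
    RingOfIntegers.coe_injective (by simpa using hroot)
  have hmin : minpoly ℤ α = F :=
    minpoly.eq_of_monic_of_irreducible_map (K := ℚ) hFmonic (by simpa [F] using hirr)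
      (by simpa [F] using hFα)
  have hmod : F.map (Int.castRingHom (ZMod p)) = X ^ p ^ r := by
    simp [F, zero_pow (by omega : u ≠ 0), zero_pow (by omega : v ≠ 0)]
  obtain ⟨s, t, hs, ht, hust⟩ := Nat.exists_mul_eq_mul_add_one (by omega : 1 < p ^ r) hu2
    (Nat.Coprime.pow_right r (hp.coprime_iff_not_dvd.mpr hpu).symm)
  obtain ⟨w, rfl⟩ := Nat.exists_eq_add_of_le huv
  have hαn : α ^ p ^ r = (p : 𝓞 K) ^ u * -((p : 𝓞 K) ^ w * a * α ^ m + b) := by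
    linear_combination hFα
  obtain ⟨θ, hθ⟩ := pow_dvd_pow_of_pow_eq_pow_mul (by omega) hαn hust
  refine AddSubgroup.prime_dvd_index_of_notMem_of_nsmul_mem hp (x := θ) (t := t)
    (notMem_adjoin_of_prime_pow_mul_eq_pow (Algebra.IsIntegral.isIntegral α) (hmin ▸ hmod) hs
      ht.ne' hθ.symm) ?_
  simpa [nsmul_eq_mul, hθ] using pow_mem (Algebra.self_mem_adjoin_singleton ℤ α) s

theorem stmt_6 (p : ℕ) (hp : p.Prime) (r m u v : ℕ) (a b : ℤ)
    (hr : 0 < r) (hu2 : 2 ≤ u) (huv : u ≤ v) (hm1 : 1 ≤ m) (hm : m < p ^ r)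
    (ha : ¬ (p : ℤ) ∣ a) (hb : ¬ (p : ℤ) ∣ b) (hpu : ¬ p ∣ u)
    (hirr : Irreducible (X ^ (p ^ r) + C ((p : ℚ) ^ v * (a : ℚ)) * X ^ m
      + C ((p : ℚ) ^ u * (b : ℚ))))
    (K : Type*) [Field K] [NumberField K] (α : 𝓞 K)
    (hroot : (α : K) ^ (p ^ r) + ((p : K) ^ v * (a : K)) * (α : K) ^ m
      + (p : K) ^ u * (b : K) = 0)
    (hgen : Algebra.adjoin ℚ ({(α : K)} : Set K) = ⊤) :
    p ∣ subIndex α :=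
  stmt_6_general p hp r m u v a b hu2 huv hm1 hm hpu hirr K α hroot
end

section
/- Let p be a prime, α a complex root of an irreducible p-Eisenstein polynomial of degree n, and K = ℚ(α). Then p does not divide the index [Z_K : Z[α]]. -/
open Polynomial NumberField

theorem stmt_8 (p : ℕ) (hp : p.Prime) (K : Type*) [Field K] [NumberField K]
    (θ : 𝓞 K) (hgen : Algebra.adjoin ℚ ({(θ : K)} : Set K) = ⊤)
    (heis : (minpoly ℤ θ).IsEisensteinAt (Ideal.span {(p : ℤ)})) :
    ¬ p ∣ subIndex θ := by
  intro hdvd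
  set A := Algebra.adjoin ℤ ({θ} : Set (𝓞 K)) with hA
  set H := A.toSubring.toAddSubgroup with hH
  have hinj : Function.Injective (algebraMap (𝓞 K) K) := RingOfIntegers.coe_injective
  -- membership transfer
  have hmap : A.map (IsScalarTower.toAlgHom ℤ (𝓞 K) K)
      = Algebra.adjoin ℤ ({(θ : K)} : Set K) := by
    rw [hA, AlgHom.map_adjoin, Set.image_singleton]
    rfl
  have hmem : ∀ x : 𝓞 K, x ∈ A ↔ (algebraMap (𝓞 K) K x) ∈
      Algebra.adjoin ℤ ({(θ : K)} : Set K) := by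
    intro x
    rw [← hmap]
    constructor
    · exact fun hx => ⟨x, hx, rfl⟩
    · rintro ⟨y, hy, hyx⟩
      rwa [← hinj hyx]
  -- torsion of the quotient
  have htor : ∀ x : 𝓞 K, ∃ b : ℤ, b ≠ 0 ∧ b • x ∈ A := by
    intro x
    have hx : (algebraMap (𝓞 K) K x) ∈ Algebra.adjoin ℚ ({(θ : K)} : Set K) := by
      rw [hgen]; trivial
    rw [Algebra.adjoin_singleton_eq_range_aeval] at hx
    obtain ⟨q, hq⟩ := hx
    obtain ⟨b, hb⟩ := IsLocalization.integerNormalization_map_to_map (nonZeroDivisors ℤ) q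
    refine ⟨(b : ℤ), nonZeroDivisors.coe_ne_zero b, ?_⟩
    rw [hmem, map_zsmul]
    have : (aeval ((θ : K)) (IsLocalization.integerNormalization (nonZeroDivisors ℤ) q))
        = (b : ℤ) • (algebraMap (𝓞 K) K x) := by
      rw [← hq, ← Polynomial.aeval_map_algebraMap ℚ, hb, map_zsmul]
      rfl
    rw [← this]
    exact Algebra.adjoin_singleton_eq_range_aeval ℤ ((θ : K)) ▸ ⟨_, rfl⟩
  -- the quotient is finite
  have hfgO : AddGroup.FG (𝓞 K) := Module.Finite.iff_addGroup_fg.mp inferInstance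
  have hfgQ : AddGroup.FG (𝓞 K ⧸ H) :=
    AddGroup.fg_of_surjective (QuotientAddGroup.mk'_surjective H)
  have htorQ : AddMonoid.IsTorsion (𝓞 K ⧸ H) := by
    intro g
    obtain ⟨x, rfl⟩ := QuotientAddGroup.mk'_surjective H g
    obtain ⟨b, hb0, hbx⟩ := htor x
    refine isOfFinAddOrder_iff_nsmul_eq_zero.mpr ⟨b.natAbs, Int.natAbs_pos.mpr hb0, ?_⟩
    have : (b.natAbs : ℤ) • x ∈ H := by
      rcases Int.natAbs_eq b with h | h
      · rwa [← h]
      · rw [← neg_neg ((b.natAbs : ℤ)), neg_smul, ← h]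
        exact neg_mem hbx
    rw [← map_nsmul]
    rw [QuotientAddGroup.mk'_apply, QuotientAddGroup.eq_zero_iff]
    rwa [← natCast_zsmul] 
  have hfinQ : Finite (𝓞 K ⧸ H) := AddCommGroup.finite_of_fg_torsion _ htorQ
  -- Cauchy: get an element of order p
  have hcard : p ∣ Nat.card (𝓞 K ⧸ H) := hdvd
  obtain ⟨g, hg⟩ := by
    haveI := Fintype.ofFinite (𝓞 K ⧸ H)
    haveI := Fact.mk hp
    exact exists_prime_addOrderOf_dvd_card (G := 𝓞 K ⧸ H) p
      (by rwa [← Nat.card_eq_fintype_card])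
  obtain ⟨x, rfl⟩ := QuotientAddGroup.mk'_surjective H g
  have hxnot : x ∉ A := by
    intro hx
    have : QuotientAddGroup.mk' H x = 0 := (QuotientAddGroup.eq_zero_iff x).mpr hx
    rw [this, addOrderOf_zero] at hg
    exact hp.ne_one hg.symm
  have hpx : (p : ℤ) • x ∈ A := by
    have : p • (QuotientAddGroup.mk' H x) = 0 := by
      rw [← hg]; exact addOrderOf_nsmul_eq_zero _
    rw [← map_nsmul, QuotientAddGroup.mk'_apply, QuotientAddGroup.eq_zero_iff] at this
    rwa [natCast_zsmul]
  -- build the power basis of K generated by θ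
  have hint : IsIntegral ℚ ((θ : K)) := IsIntegral.of_finite ℚ _
  let e : Algebra.adjoin ℚ ({(θ : K)} : Set K) ≃ₐ[ℚ] K :=
    (Subalgebra.equivOfEq _ _ hgen).trans Subalgebra.topEquiv
  let B : PowerBasis ℚ K := (Algebra.adjoin.powerBasis hint).map e
  have hBgen : B.gen = (θ : K) := rfl
  have hBint : IsIntegral ℤ B.gen := by rw [hBgen]; exact θ.isIntegral_coe
  have heis' : (minpoly ℤ B.gen).IsEisensteinAt (Ideal.span {(p : ℤ)}) := by
    rw [hBgen]
    rwa [minpoly.algebraMap_eq hinj]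
  have hz : (p : ℤ) • (algebraMap (𝓞 K) K x) ∈ Algebra.adjoin ℤ ({B.gen} : Set K) := by
    rw [hBgen, ← map_zsmul]
    exact (hmem _).mp hpx
  have hzmem := mem_adjoin_of_smul_prime_smul_of_minpoly_isEisensteinAt
    (R := ℤ) (K := ℚ) (L := K) ((Nat.prime_iff_prime_int.mp hp)) hBint x.isIntegral_coe hz heis'
  rw [hBgen] at hzmem
  exact hxnot ((hmem x).mpr hzmem)
end
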